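/- arXiv:1003.4144 — 2 statements merged into one kernel-verified Lean document; each statement's English description precedes it below -/
import Mathlib

section
/- Write ρ1 = A1·w + B1 and ρ2 = A2·w + B2 as polynomials in w, where A1 = p66·z + p46, B1 = −z⁴ + p56·z³ + p36·z² + p26·z + p16, A2 = −2z² + (p56 − p666)·z + (p45 − p466), B2 = (p55 − p566)·z³ + (p35 − p366)·z² + (p25 − p266)·z + (p15 − p166). Then the resultant of ρ1 and ρ2 with respect to w satisfies the identity A1·B2 − A2·B1 = ρ12 in R[z], where ρ12 = −2z⁶ + (3p56 − p666)z⁵ + (p55p66 + 2p36 − p56² + p45 − p566p66 + p56p666 − p466)z⁴ + (2p26 − p56p45 + p35p66 − p566p46 + p55p46 − p366p66 + p56p466 − p36p56 + p36p666)z³ + (2p16 + p35p46 − p266p66 − p366p46 + p26p666 − p26p56 + p25p66 − p36p45 + p36p466)z² + (p16p666 − p266p46 − p16p56 − p26p45 + p15p66 − p166p66 + p25p46 + p26p466)z − p16p45 − p166p46 + p15p46 + p16p466. Consequently, for any commutative ring S, any ring homomorphism R → S, and any elements z, w ∈ S with ρ1(z,w) = 0 and ρ2(z,w) = 0, the element ρ12(z)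 is 0. -/
/-!
Both `ρ1 = A1·w + B1` and `ρ2 = A2·w + B2` are linear in `w`, so `w` is eliminated by the
`2 × 2` determinant `A1·B2 − A2·B1`, which vanishes at every common zero; expanding it gives `ρ12`.
-/

/-- The degree-six resultant polynomial `ρ12` arising from the Kleinian formula for the
cyclic (3,7)-curve, with the 2- and 3-index ℘-values as parameters. -/
def rho12 {S : Type*} [CommRing S]
    (p16 p26 p36 p46 p56 p66 p15 p25 p35 p45 p55
     p166 p266 p366 p466 p566 p666 z : S) : S :=
  -2 * z ^ 6 + (3 * p56 - p666) * z ^ 5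
    + (p55 * p66 + 2 * p36 - p56 ^ 2 + p45 - p566 * p66 + p56 * p666 - p466) * z ^ 4
    + (2 * p26 - p56 * p45 + p35 * p66 - p566 * p46 + p55 * p46 - p366 * p66
        + p56 * p466 - p36 * p56 + p36 * p666) * z ^ 3
    + (2 * p16 + p35 * p46 - p266 * p66 - p366 * p46 + p26 * p666 - p26 * p56
        + p25 * p66 - p36 * p45 + p36 * p466) * z ^ 2
    + (p16 * p666 - p266 * p46 - p16 * p56 - p26 * p45 + p15 * p66 - p166 * p66
        + p25 * p46 + p26 * p466) * z
    - p16 * p45 - p166 * p46 + p15 * p46 + p16 * p466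

theorem mul_sub_mul_eq_zero_of_linear_eq_zero {R : Type*} [CommRing R] {a₁ b₁ a₂ b₂ w : R}
    (h₁ : a₁ * w + b₁ = 0) (h₂ : a₂ * w + b₂ = 0) : a₁ * b₂ - a₂ * b₁ = 0 := by
  linear_combination a₁ * h₂ - a₂ * h₁

theorem resultant_eq_rho12 {S : Type*} [CommRing S]
    (p16 p26 p36 p46 p56 p66 p15 p25 p35 p45 p55 p166 p266 p366 p466 p566 p666 z : S) :
    (p66 * z + p46) *
        ((p55 - p566) * z ^ 3 + (p35 - p366) * z ^ 2 + (p25 - p266) * z + (p15 - p166))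
      - (-2 * z ^ 2 + (p56 - p666) * z + (p45 - p466)) *
        (-z ^ 4 + p56 * z ^ 3 + p36 * z ^ 2 + p26 * z + p16)
      = rho12 p16 p26 p36 p46 p56 p66 p15 p25 p35 p45 p55 p166 p266 p366 p466 p566 p666 z := by
  unfold rho12
  ring

/-- with `ρ1 = A1·w + B1`, `ρ2 = A2·w + B2`, the resultant identity
`A1·B2 − A2·B1 = ρ12` holds, and consequently for any commutative ring `S` and any values
`z, w` with `ρ1(z,w) = 0` and `ρ2(z,w) = 0` one has `ρ12(z) = 0`. -/
theorem stmt_0 {S : Type*} [CommRing S]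
    (p16 p26 p36 p46 p56 p66 p15 p25 p35 p45 p55
     p166 p266 p366 p466 p566 p666 z w : S) :
    ((p66 * z + p46) *
        ((p55 - p566) * z ^ 3 + (p35 - p366) * z ^ 2 + (p25 - p266) * z + (p15 - p166))
      - (-2 * z ^ 2 + (p56 - p666) * z + (p45 - p466)) *
        (-z ^ 4 + p56 * z ^ 3 + p36 * z ^ 2 + p26 * z + p16)
      = rho12 p16 p26 p36 p46 p56 p66 p15 p25 p35 p45 p55 p166 p266 p366 p466 p566 p666 z)
    ∧
    ((-z ^ 4 + p56 * z ^ 3 + p36 * z ^ 2 + (p66 * w + p26) * z + p46 * w + p16 = 0) →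
      ((p55 - p566) * z ^ 3 + (p35 - 2 * w - p366) * z ^ 2
          + (p25 - p266 + p56 * w - p666 * w) * z + p15 - p466 * w - p166 + p45 * w = 0) →
      rho12 p16 p26 p36 p46 p56 p66 p15 p25 p35 p45 p55 p166 p266 p366 p466 p566 p666 z = 0) := by
  refine ⟨resultant_eq_rho12 .., fun hρ1 hρ2 => ?_⟩
  rw [← resultant_eq_rho12]
  apply mul_sub_mul_eq_zero_of_linear_eq_zero (w := w)
  · linear_combination hρ1
  · linear_combination hρ2
end

section
/- Suppose the two 4-index relations ℘_{5666} = 6℘_{56}℘_{66} + 3℘_{46} + 3λ6℘_{66} and ℘_{5566} = 4℘_{36} − ℘_{45} + 3λ6℘_{56} + 2λ5 + 2℘_{55}℘_{66} + 4℘_{56}² hold identically on U. Then the bilinear identity 0 = −2℘_{366} + 2℘_{456} − ℘_{55}℘_{666} − ℘_{56}℘_{566} + 2℘_{66}℘_{556} holds identically on U. (It is obtained by substituting the two hypothesised relations into ∂℘_{5666}/∂u_5 − ∂℘_{5566}/∂u_6 = 0.) -/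
/-- Partial derivative in the `i`-th coordinate direction of a function `ℂ⁶ → ℂ`. -/
noncomputable def pd (i : Fin 6) (f : (Fin 6 → ℂ) → ℂ) : (Fin 6 → ℂ) → ℂ :=
  fun u => fderiv ℂ f u (Pi.single i 1)

/-- `∂_j log σ = ∂_j σ / σ` (independent of the choice of branch of `log σ`). -/
noncomputable def dlog (σ : (Fin 6 → ℂ) → ℂ) (j : Fin 6) : (Fin 6 → ℂ) → ℂ :=
  fun u => pd j σ u / σ u

/-- The 2-index Kleinian ℘-function `℘_{ij} = −∂_i ∂_j log σ`
(here the variable `u_k` corresponds to the coordinate `k − 1 : Fin 6`). -/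
noncomputable def wp2 (σ : (Fin 6 → ℂ) → ℂ) (i j : Fin 6) : (Fin 6 → ℂ) → ℂ :=
  fun u => -(pd i (dlog σ j) u)

/-- The 3-index Kleinian ℘-function `℘_{ijk} = −∂_i ∂_j ∂_k log σ`. -/
noncomputable def wp3 (σ : (Fin 6 → ℂ) → ℂ) (i j k : Fin 6) : (Fin 6 → ℂ) → ℂ :=
  fun u => -(pd i (pd j (dlog σ k)) u)

/-- The 4-index Kleinian ℘-function `℘_{ijkl} = −∂_i ∂_j ∂_k ∂_l log σ`. -/
noncomputable def wp4 (σ : (Fin 6 → ℂ) → ℂ) (i j k l : Fin 6) : (Fin 6 → ℂ) → ℂ :=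
  fun u => -(pd i (pd j (pd k (dlog σ l))) u)

/-! Differentiate the first relation in `u₅` and the second in `u₆`. Both left-hand sides become
`−∂⁵ log σ / ∂u₅² ∂u₆³` by the symmetry of mixed partials of the analytic function `∂_k log σ`, so
the two differentiated right-hand sides agree; after sorting the indices of the 3-index functions
this equality is twice the claimed identity. -/

section PartialDerivatives

variable {U : Set (Fin 6 → ℂ)} {f g : (Fin 6 → ℂ) → ℂ} {u : Fin 6 → ℂ} {i : Fin 6}

theorem AnalyticOnNhd.pd (hf : AnalyticOnNhd ℂ f U) (i : Fin 6) : AnalyticOnNhd ℂ (pd i f) U :=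
  fun u hu => ((ContinuousLinearMap.apply ℂ ℂ (Pi.single i 1 : Fin 6 → ℂ)).analyticAt _).comp
    (hf u hu).fderiv

theorem IsOpen.pd_congr (hU : IsOpen U) (hu : u ∈ U) (h : ∀ x ∈ U, f x = g x) (i : Fin 6) :
    pd i f u = pd i g u := by
  unfold pd
  rw [Filter.EventuallyEq.fderiv_eq (Filter.eventually_of_mem (hU.mem_nhds hu) h)]

theorem pd_neg : pd i (fun x => -f x) u = -pd i f u := by
  simp [pd, fderiv_fun_neg]

theorem pd_const (c : ℂ) : pd i (fun _ => c) u = 0 := by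
  simp [pd]

theorem pd_add (hf : DifferentiableAt ℂ f u) (hg : DifferentiableAt ℂ g u) :
    pd i (fun x => f x + g x) u = pd i f u + pd i g u := by
  simp [pd, fderiv_fun_add hf hg]

theorem pd_sub (hf : DifferentiableAt ℂ f u) (hg : DifferentiableAt ℂ g u) :
    pd i (fun x => f x - g x) u = pd i f u - pd i g u := by
  simp [pd, fderiv_fun_sub hf hg]

theorem pd_mul (hf : DifferentiableAt ℂ f u) (hg : DifferentiableAt ℂ g u) :
    pd i (fun x => f x * g x) u = pd i f u * g u + f u * pd i g u := by
  simp [pd, fderiv_fun_mul hf hg]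
  ring

theorem pd_pow (hf : DifferentiableAt ℂ f u) (n : ℕ) :
    pd i (fun x => f x ^ n) u = n * f u ^ (n - 1) * pd i f u := by
  simp [pd, fderiv_fun_pow n hf]

theorem pd_comm (hf : AnalyticOnNhd ℂ f U) (hu : u ∈ U) (i j : Fin 6) :
    pd i (pd j f) u = pd j (pd i f) u := by
  have hsymm : IsSymmSndFDerivAt ℂ f u :=
    ((hf u hu).contDiffAt (n := 2)).isSymmSndFDerivAt (by simp)
  have hpd_pd : ∀ k l : Fin 6,
      pd k (pd l f) u = fderiv ℂ (fderiv ℂ f) u (Pi.single k 1) (Pi.single l 1) := by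
    intro k l
    change fderiv ℂ (fun x => fderiv ℂ f x (Pi.single l 1)) u (Pi.single k 1) = _
    simp [fderiv_clm_apply (hf u hu).fderiv.differentiableAt (differentiableAt_const _)]
  rw [hpd_pd, hpd_pd, hsymm]

theorem pd_pd_pd_comm_inner (hU : IsOpen U) (hf : AnalyticOnNhd ℂ f U) (hu : u ∈ U)
    (i j k : Fin 6) : pd i (pd j (pd k f)) u = pd i (pd k (pd j f)) u :=
  hU.pd_congr hu (fun _ hx => pd_comm hf hx j k) i

end PartialDerivatives

section Kleinian

variable {U : Set (Fin 6 → ℂ)} {σ : (Fin 6 → ℂ) → ℂ} {u : Fin 6 → ℂ}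

theorem AnalyticOnNhd.dlog (hσ : AnalyticOnNhd ℂ σ U) (hσ0 : ∀ u ∈ U, σ u ≠ 0) (j : Fin 6) :
    AnalyticOnNhd ℂ (dlog σ j) U :=
  fun x hx => (hσ.pd j x hx).div (hσ x hx) (hσ0 x hx)

/-- `log σ` need not exist globally, so this is read off from `∂_k σ = σ · ∂_k log σ`, whose
`j`-derivative is `∂_j σ · ∂_k log σ + σ · ∂_j ∂_k log σ`. -/
theorem pd_dlog_comm (hU : IsOpen U) (hσ : AnalyticOnNhd ℂ σ U) (hσ0 : ∀ u ∈ U, σ u ≠ 0)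
    (hu : u ∈ U) (j k : Fin 6) : pd j (dlog σ k) u = pd k (dlog σ j) u := by
  have hpd_pd : ∀ a b : Fin 6,
      pd a (pd b σ) u = pd a σ u * dlog σ b u + σ u * pd a (dlog σ b) u := by
    intro a b
    have hpd : ∀ x ∈ U, pd b σ x = σ x * dlog σ b x := fun x hx => by
      rw [dlog, mul_div_cancel₀ _ (hσ0 x hx)]
    rw [hU.pd_congr hu hpd a,
      pd_mul (hσ u hu).differentiableAt ((hσ.dlog hσ0 b) u hu).differentiableAt]
  have hcomm := pd_comm hσ hu j k
  rw [hpd_pd, hpd_pd] at hcomm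
  refine mul_left_cancel₀ (hσ0 u hu) ?_
  simp only [dlog] at hcomm ⊢
  linear_combination hcomm

theorem pd_wp2 (i j k : Fin 6) : pd i (wp2 σ j k) u = wp3 σ i j k u :=
  pd_neg

theorem wp3_swap_left (hσ : AnalyticOnNhd ℂ σ U) (hσ0 : ∀ u ∈ U, σ u ≠ 0) (hu : u ∈ U)
    (i j k : Fin 6) : wp3 σ i j k u = wp3 σ j i k u := by
  rw [wp3, wp3, pd_comm (hσ.dlog hσ0 k) hu]

theorem wp3_swap_right (hU : IsOpen U) (hσ : AnalyticOnNhd ℂ σ U) (hσ0 : ∀ u ∈ U, σ u ≠ 0)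
    (hu : u ∈ U) (i j k : Fin 6) : wp3 σ i j k u = wp3 σ i k j u := by
  rw [wp3, wp3, hU.pd_congr hu (fun x hx => pd_dlog_comm hU hσ hσ0 hx j k) i]

theorem differentiableAt_wp2 (hσ : AnalyticOnNhd ℂ σ U) (hσ0 : ∀ u ∈ U, σ u ≠ 0) (hu : u ∈ U)
    (i j : Fin 6) : DifferentiableAt ℂ (wp2 σ i j) u :=
  ((hσ.dlog hσ0 j).pd i u hu).neg.differentiableAt

theorem pd_wp4_comm (hU : IsOpen U) (hσ : AnalyticOnNhd ℂ σ U) (hσ0 : ∀ u ∈ U, σ u ≠ 0)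
    (hu : u ∈ U) (i j k : Fin 6) : pd i (wp4 σ i j j k) u = pd j (wp4 σ i i j k) u := by
  have hL := hσ.dlog hσ0 k
  unfold wp4
  rw [pd_neg, pd_neg, neg_inj, pd_comm ((hL.pd j).pd i) hu j i,
    pd_pd_pd_comm_inner hU (hL.pd j) hu i j i]

end Kleinian

/-- if `℘_{5666} = 6℘_{56}℘_{66} + 3℘_{46} + 3λ6℘_{66}` and
`℘_{5566} = 4℘_{36} − ℘_{45} + 3λ6℘_{56} + 2λ5 + 2℘_{55}℘_{66} + 4℘_{56}²` hold identically
on `U`, then the bilinear identity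
`0 = −2℘_{366} + 2℘_{456} − ℘_{55}℘_{666} − ℘_{56}℘_{566} + 2℘_{66}℘_{556}` holds identically
on `U`. -/
theorem stmt_17 (U : Set (Fin 6 → ℂ)) (hU : IsOpen U)
    (σ : (Fin 6 → ℂ) → ℂ) (hσ : AnalyticOnNhd ℂ σ U) (hσ0 : ∀ u ∈ U, σ u ≠ 0) (l5 l6 : ℂ)
    (h1 : ∀ u ∈ U, wp4 σ 4 5 5 5 u
      = 6 * wp2 σ 4 5 u * wp2 σ 5 5 u + 3 * wp2 σ 3 5 u + 3 * l6 * wp2 σ 5 5 u)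
    (h2 : ∀ u ∈ U, wp4 σ 4 4 5 5 u
      = 4 * wp2 σ 2 5 u - wp2 σ 3 4 u + 3 * l6 * wp2 σ 4 5 u + 2 * l5
          + 2 * wp2 σ 4 4 u * wp2 σ 5 5 u + 4 * (wp2 σ 4 5 u) ^ 2) :
    ∀ u ∈ U,
      0 = -2 * wp3 σ 2 5 5 u + 2 * wp3 σ 3 4 5 u - wp2 σ 4 4 u * wp3 σ 5 5 5 u
            - wp2 σ 4 5 u * wp3 σ 4 5 5 u + 2 * wp2 σ 5 5 u * wp3 σ 4 4 5 u := by
  intro u hu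
  have hdiff := differentiableAt_wp2 hσ hσ0 hu
  have hd1 := hU.pd_congr hu h1 4
  rw [pd_wp4_comm hU hσ hσ0 hu, hU.pd_congr hu h2 5] at hd1
  simp (disch := fun_prop) only [pd_add, pd_sub, pd_mul, pd_pow, pd_const, pd_wp2] at hd1
  have swap_left := wp3_swap_left hσ hσ0 hu
  have swap_right := wp3_swap_right hU hσ hσ0 hu
  rw [swap_left 5 2 5, swap_left 5 3 4, swap_right 3 5 4, swap_left 5 4 5, swap_left 5 4 4,
    swap_right 4 5 4, swap_left 4 3 5] at hd1
  linear_combination (1 / 2 : ℂ) * hd1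
end
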